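/- arXiv:2305.01927 — 2 statements merged into one kernel-verified Lean document; each statement's English description precedes it below -/
import Mathlib

section
/- For every finite graph G, the robust chromatic number χ₁(G) equals the minimum number k of classes in a partition V(G) = V_1 ∪ … ∪ V_k such that for each i the subgraph of G induced by V_i is quasi-unicyclic. -/
open SimpleGraph

/-- A 1-selection on `G`: each vertex `v` selects (at most) one pair containing `v`;
deleting the selected pairs from the edge set removes at most one edge incident
to each vertex.  (Selecting a non-edge, e.g. the diagonal, deletes nothing at `v`.) -/
def IsOneSelection {V : Type*} (G : SimpleGraph V) (f : V → Sym2 V) : Prop :=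
  ∀ v : V, v ∈ f v

/-- The 1-removed graph `G_f`. -/
def oneRemoved {V : Type*} (G : SimpleGraph V) (f : V → Sym2 V) : SimpleGraph V :=
  G.deleteEdges (Set.range f)

/-- The chromatic number of `G` as a natural number. -/
noncomputable def chromNum {V : Type*} (G : SimpleGraph V) : ℕ :=
  sInf {n : ℕ | G.Colorable n}

/-- The robust chromatic number `χ₁(G)`: the minimum of `χ(G_f)` over all 1-selections. -/
noncomputable def robustChromNum {V : Type*} (G : SimpleGraph V) : ℕ :=
  sInf {m : ℕ | ∃ f : V → Sym2 V, IsOneSelection G f ∧ chromNum (oneRemoved G f) = m}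

/-- The robust clique number `ω₁(G)`: the minimum of `ω(G_f)` over all 1-selections. -/
noncomputable def robustCliqueNum {V : Type*} (G : SimpleGraph V) : ℕ :=
  sInf {m : ℕ | ∃ f : V → Sym2 V, IsOneSelection G f ∧ (oneRemoved G f).cliqueNum = m}

/-- A set of vertices is independent if no two of its elements are adjacent. -/
def IsIndepVxSet {V : Type*} (G : SimpleGraph V) (s : Set V) : Prop :=
  s.Pairwise fun a b => ¬ G.Adj a b

/-- The independence number of `G`. -/
noncomputable def indepNum {V : Type*} (G : SimpleGraph V) : ℕ :=
  sSup {n : ℕ | ∃ s : Finset V, IsIndepVxSet G ↑s ∧ s.card = n}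

/-- The robust independence number `α₁(G)`: the maximum of `α(G_f)` over all 1-selections. -/
noncomputable def robustIndepNum {V : Type*} (G : SimpleGraph V) : ℕ :=
  sSup {m : ℕ | ∃ f : V → Sym2 V, IsOneSelection G f ∧ _root_.indepNum (oneRemoved G f) = m}

/-- `U` is robust independent in `G` if some 1-selection makes it independent. -/
def IsRobustIndep {V : Type*} (G : SimpleGraph V) (U : Set V) : Prop :=
  ∃ f : V → Sym2 V, IsOneSelection G f ∧ IsIndepVxSet (oneRemoved G f) U

/-- Threshold graph. -/
def IsThresholdGraph {V : Type*} (G : SimpleGraph V) : Prop :=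
  ∃ (h : ℝ) (g : V → ℝ), ∀ x y : V, x ≠ y → (G.Adj x y ↔ g x + g y > h)

/-- `G` is ω-unique: it has exactly one clique of order `ω(G)`. -/
def IsOmegaUnique {V : Type*} (G : SimpleGraph V) : Prop :=
  ∃! s : Finset V, G.IsNClique G.cliqueNum s

/-- Split graph: vertex set partitions into a clique and an independent set. -/
def IsSplitGraph {V : Type*} (G : SimpleGraph V) : Prop :=
  ∃ A : Set V, G.IsClique A ∧ IsIndepVxSet G Aᶜ

/-- Chordal graph: no induced cycle of length greater than 3. -/
def IsChordalGraph {V : Type*} (G : SimpleGraph V) : Prop :=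
  ∀ n : ℕ, 4 ≤ n → ¬ ∃ φ : Fin n ↪ V,
    ∀ i j : Fin n, G.Adj (φ i) (φ j) ↔ (SimpleGraph.cycleGraph n).Adj i j

/-- Interval graph: vertices can be assigned nonempty closed real intervals so that
two distinct vertices are adjacent iff their intervals intersect. -/
def IsIntervalGraph {V : Type*} (G : SimpleGraph V) : Prop :=
  ∃ a b : V → ℝ, (∀ v, a v ≤ b v) ∧
    ∀ u v : V, u ≠ v →
      (G.Adj u v ↔ (Set.Icc (a u) (b u) ∩ Set.Icc (a v) (b v)).Nonempty)

/-- Unit interval graph: vertices can be labelled by reals so that two distinct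
vertices are adjacent iff their labels are at distance less than 1. -/
def IsUnitIntervalGraph {V : Type*} (G : SimpleGraph V) : Prop :=
  ∃ r : V → ℝ, ∀ u v : V, u ≠ v → (G.Adj u v ↔ |r u - r v| < 1)

/-- Quasi-unicyclic: every connected component contains at most one cycle,
i.e. any two cycles lying in the same component have the same edge set. -/
def QuasiUnicyclic {V : Type*} [DecidableEq V] (G : SimpleGraph V) : Prop :=
  ∀ (u v : V) (p : G.Walk u u) (q : G.Walk v v),
    p.IsCycle → q.IsCycle → G.Reachable u v →
      p.edges.toFinset = q.edges.toFinset

/-- The Kneser graph `KG(n,k)`. -/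
def kneserGraph (n k : ℕ) : SimpleGraph {s : Finset (Fin n) // s.card = k} where
  Adj a b := a ≠ b ∧ Disjoint a.1 b.1
  symm := by
    constructor
    intro a b hab
    exact ⟨hab.1.symm, hab.2.symm⟩
  loopless := by
    constructor
    intro a ha
    exact ha.1 rfl

/-!
A 1-selection `f` deletes every edge of `H` precisely when each edge is selected by one of its
endpoints. Then every edge joins some `v` to its partner `g v`, the other end of `f v`. On a cycle
of `H` the `f`-images of the vertices are exactly the edges (there are equally many), so `g`
permutes the vertices of the cycle; hence the vertex set of the cycle is the set of `g`-periodic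
points reached from any vertex of its component, and its edge set is the image of that set.
Conversely a finite quasi-unicyclic graph is peeled: a leaf selects its edge, and if there is no
leaf, a cycle closed at the end of a longest path is a whole component (another edge at it would
give a second cycle), whose vertices select its edges in turn. Applied to the colour classes of
`G_f`, this says that `χ₁(G) ≤ k` iff `V(G)` splits into `k` classes inducing quasi-unicyclic
graphs.
-/

namespace SimpleGraph

variable {W : Type*} {H : SimpleGraph W}

lemma isOneSelection_diag : IsOneSelection H fun v => s(v, v) :=
  fun v => Sym2.mem_mk_left v v

lemma IsOneSelection.update {f : W → Sym2 W} [DecidableEq W] (hf : IsOneSelection H f) {v : W}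
    {e : Sym2 W} (hv : v ∈ e) : IsOneSelection H (Function.update f v e) := by
  intro w
  rcases eq_or_ne w v with rfl | hw
  · rwa [Function.update_self]
  · rw [Function.update_of_ne hw]; exact hf w

noncomputable def IsOneSelection.partner {f : W → Sym2 W} (hf : IsOneSelection H f) (v : W) : W :=
  Sym2.Mem.other (hf v)

lemma IsOneSelection.mk_partner {f : W → Sym2 W} (hf : IsOneSelection H f) (v : W) :
    s(v, hf.partner v) = f v :=
  Sym2.other_spec (hf v)

lemma deleteEdges_lt_of_mem {S : Set (Sym2 W)} {e : Sym2 W} (he : e ∈ H.edgeSet) (heS : e ∈ S) :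
    H.deleteEdges S < H :=
  lt_of_le_of_ne (H.deleteEdges_le S) fun h => by
    rw [← h, edgeSet_deleteEdges] at he
    exact he.2 heS

namespace Walk

lemma IsCycle.card_support_toFinset [DecidableEq W] {u : W} {p : H.Walk u u} (hp : p.IsCycle) :
    p.support.toFinset.card = p.length := by
  rw [← p.cons_tail_support, List.toFinset_cons,
    Finset.insert_eq_of_mem (List.mem_toFinset.mpr (p.end_mem_tail_support hp.not_nil)),
    List.toFinset_card_of_nodup hp.support_nodup, List.length_tail, length_support]
  rfl

lemma IsCycle.exists_ne_mk_mem_edges {u x : W} {p : H.Walk u u} (hp : p.IsCycle)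
    (hx : x ∈ p.support) : ∃ y z, y ≠ z ∧ s(x, y) ∈ p.edges ∧ s(x, z) ∈ p.edges := by
  obtain ⟨y, z, hyz, hxyz⟩ := Set.ncard_eq_two.mp (hp.ncard_neighborSet_toSubgraph_eq_two hx)
  have hy : y ∈ p.toSubgraph.neighborSet x := by rw [hxyz]; simp
  have hz : z ∈ p.toSubgraph.neighborSet x := by rw [hxyz]; simp
  exact ⟨y, z, hyz, adj_toSubgraph_iff_mem_edges.mp hy, adj_toSubgraph_iff_mem_edges.mp hz⟩

lemma IsPath.exists_isOneSelection {y u : W} {r : H.Walk y u} (hr : r.IsPath) :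
    ∃ φ, IsOneSelection H φ ∧ ∀ e ∈ r.edges, ∃ v ∈ r.support, v ≠ u ∧ φ v = e := by
  classical
  induction r with
  | nil => exact ⟨_, isOneSelection_diag, by simp⟩
  | @cons y y' u h r ih =>
    obtain ⟨φ, hφ, hcov⟩ := ih hr.of_cons
    have hy : y ∉ r.support := ((cons_isPath_iff h r).mp hr).2
    refine ⟨Function.update φ y s(y, y'), hφ.update (Sym2.mem_mk_left y y'), ?_⟩
    simp only [edges_cons, support_cons, List.mem_cons]
    rintro e (rfl | he)
    · exact ⟨y, .inl rfl, fun hyu => hy (hyu ▸ r.end_mem_support), Function.update_self ..⟩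
    · obtain ⟨v, hv, hvu, rfl⟩ := hcov e he
      exact ⟨v, .inr hv, hvu, Function.update_of_ne (ne_of_mem_of_not_mem hv hy) ..⟩

lemma IsCycle.exists_isOneSelection {u : W} {c : H.Walk u u} (hc : c.IsCycle) :
    ∃ φ, IsOneSelection H φ ∧ ∀ e ∈ c.edges, ∃ v ∈ c.support, φ v = e := by
  classical
  cases c with
  | nil => exact absurd hc.not_nil (by simp)
  | @cons _ y _ h r =>
    obtain ⟨φ, hφ, hcov⟩ := ((cons_isCycle_iff r h).mp hc).1.exists_isOneSelection
    refine ⟨Function.update φ u s(u, y), hφ.update (Sym2.mem_mk_left u y), ?_⟩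
    simp only [edges_cons, support_cons, List.mem_cons]
    rintro e (rfl | he)
    · exact ⟨u, .inl rfl, Function.update_self ..⟩
    · obtain ⟨v, hv, hvu, rfl⟩ := hcov e he
      exact ⟨v, .inr hv, Function.update_of_ne hvu ..⟩

end Walk

open Walk

lemma exists_isPath_forall_adj_mem_support [Finite W] (z : W) :
    ∃ (b : W) (P : H.Walk b z), P.IsPath ∧ ∀ x, H.Adj b x → x ∈ P.support := by
  have := Fintype.ofFinite W
  by_contra! hext
  have hlong : ∀ n, ∃ (b : W) (P : H.Walk b z), P.IsPath ∧ P.length = n := by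
    intro n
    induction n with
    | zero => exact ⟨z, nil, IsPath.nil, rfl⟩
    | succ n ih =>
      obtain ⟨b, P, hP, rfl⟩ := ih
      obtain ⟨x, hbx, hx⟩ := hext b P hP
      exact ⟨x, cons hbx.symm P, hP.cons hx, rfl⟩
  obtain ⟨b, P, hP, hlen⟩ := hlong (Fintype.card W)
  exact hP.length_lt.ne hlen

lemma exists_isCycle_of_ncard_neighborSet_ne_one [Finite W] {z y : W} (hzy : H.Adj z y)
    (hdeg : ∀ v, H.Reachable z v → v ≠ z → (H.neighborSet v).ncard ≠ 1) :
    ∃ (u : W) (c : H.Walk u u), c.IsCycle ∧ H.Reachable z u := by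
  classical
  obtain ⟨b, P, hP, hmax⟩ := exists_isPath_forall_adj_mem_support (H := H) z
  cases P with
  | nil => exact absurd (by simpa using hmax y hzy) hzy.ne'
  | @cons _ y' _ h R =>
    obtain ⟨hR, hbR⟩ := (cons_isPath_iff h R).mp hP
    have hreach : H.Reachable z b := (cons h R).reachable.symm
    -- the maximal path cannot be extended at `b`, so a second neighbour of `b` closes a cycle
    obtain ⟨x, hbx, hxy'⟩ : ∃ x, H.Adj b x ∧ x ≠ y' := by
      by_contra! hall
      exact hdeg b hreach (fun hbz => hbR (hbz ▸ R.end_mem_support))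
        (Set.ncard_eq_one.mpr ⟨y', Set.eq_singleton_iff_unique_mem.mpr ⟨h, hall⟩⟩)
    have hxR : x ∈ R.support := by
      simpa [hbx.ne'] using hmax x hbx
    have hb : b ∉ (R.takeUntil x hxR).support := fun hb =>
      hbR (R.support_takeUntil_subset_support hxR hb)
    refine ⟨x, cons hbx.symm (cons h (R.takeUntil x hxR)), ?_, hreach.trans hbx.reachable⟩
    rw [cons_isCycle_iff]
    refine ⟨(hR.takeUntil hxR).cons hb, ?_⟩
    simp only [edges_cons, List.mem_cons, not_or]
    exact ⟨by simp [hbx.ne', hxy'], fun he => hb (snd_mem_support_of_mem_edges _ he)⟩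

end SimpleGraph

open SimpleGraph SimpleGraph.Walk

section QuasiUnicyclic

variable {W W' : Type*} [DecidableEq W] {H : SimpleGraph W}

lemma QuasiUnicyclic.of_hom [DecidableEq W'] {K : SimpleGraph W'} (φ : H →g K)
    (hφ : Function.Injective φ) (hK : QuasiUnicyclic K) : QuasiUnicyclic H := by
  intro u v p q hp hq huv
  have h := hK _ _ (p.map φ) (q.map φ) (hp.map hφ) (hq.map hφ) (huv.map φ)
  ext e
  simpa [edges_map, (Sym2.map.injective hφ).eq_iff] using Finset.ext_iff.mp h (e.map φ)

lemma QuasiUnicyclic.anti {H' : SimpleGraph W} (hle : H' ≤ H) (hH : QuasiUnicyclic H) :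
    QuasiUnicyclic H' :=
  hH.of_hom (Hom.ofLE hle) Function.injective_id

lemma QuasiUnicyclic.induce (s : Set W) (hH : QuasiUnicyclic H) : QuasiUnicyclic (H.induce s) :=
  hH.of_hom (Embedding.induce s).toHom Subtype.val_injective

lemma QuasiUnicyclic.mk_mem_edges_of_mem_support [Finite W] (hH : QuasiUnicyclic H)
    (hdeg : ∀ v, (H.neighborSet v).ncard ≠ 1) {u x z : W} {q : H.Walk u u} (hq : q.IsCycle)
    (hx : x ∈ q.support) (hxz : H.Adj x z) : s(x, z) ∈ q.edges := by
  by_contra hxzq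
  set K := H.deleteEdges {s(x, z)}
  have hKH : K ≤ H := H.deleteEdges_le _
  have hux : H.Reachable u x := ⟨q.takeUntil x hx⟩
  by_cases hzx : K.Reachable z x
  · obtain ⟨P, hP⟩ := hzx.exists_isPath
    have hC : (cons hxz (P.mapLe hKH)).IsCycle := by
      rw [cons_isCycle_iff, edges_mapLe_eq_edges]
      exact ⟨hP.mapLe hKH, fun he => by simpa [K] using P.edges_subset_edgeSet he⟩
    have hCq := hH x u _ q hC hq hux.symm
    exact hxzq (List.mem_toFinset.mp (hCq ▸ List.mem_toFinset.mpr (by simp)))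
  · -- `s(x, z)` is a bridge; a cycle on the `z` side would have to be `q`, which contains `x`
    obtain ⟨y, hzy, hyx⟩ : ∃ y, H.Adj z y ∧ y ≠ x := by
      by_contra! hall
      exact hdeg z (Set.ncard_eq_one.mpr
        ⟨x, Set.eq_singleton_iff_unique_mem.mpr ⟨hxz.symm, hall⟩⟩)
    have hKzy : K.Adj z y := by simp [K, hzy, hyx, hxz.ne']
    have hKdeg : ∀ v, K.Reachable z v → v ≠ z → (K.neighborSet v).ncard ≠ 1 := by
      intro v hzv hvz
      have hvx : v ≠ x := by rintro rfl; exact hzx hzv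
      have hKv : K.neighborSet v = H.neighborSet v := by
        ext w; simp [K, hvx, hvz]
      exact hKv ▸ hdeg v
    obtain ⟨w, c, hc, hzw⟩ := exists_isCycle_of_ncard_neighborSet_ne_one hKzy hKdeg
    have hcq := hH w u (c.mapLe hKH) q (hc.mapLe hKH) hq
      ((hzw.mono hKH).symm.trans (hxz.reachable.symm.trans hux.symm))
    rw [edges_mapLe_eq_edges] at hcq
    obtain ⟨x', -, -, hxx', -⟩ := hq.exists_ne_mk_mem_edges hx
    have hxc : s(x, x') ∈ c.edges := List.mem_toFinset.mp (hcq ▸ List.mem_toFinset.mpr hxx')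
    exact hzx (hzw.trans ⟨c.takeUntil x (c.fst_mem_support_of_mem_edges hxc)⟩)

end QuasiUnicyclic

/-- Equivalently, the 1-removed graph `oneRemoved H f` has no edges. -/
def IsCoveringSelection {W : Type*} (H : SimpleGraph W) (f : W → Sym2 W) : Prop :=
  IsOneSelection H f ∧ H.edgeSet ⊆ Set.range f

/-- For finite `α`, the cycle of the functional graph of `g` that the orbit of `x` falls into. -/
def limitCycle {α : Type*} (g : α → α) (x : α) : Set α :=
  Function.periodicPts g ∩ Set.range fun n => g^[n] x

lemma limitCycle_apply {α : Type*} (g : α → α) (x : α) : limitCycle g (g x) = limitCycle g x := by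
  ext w
  simp only [limitCycle, Set.mem_inter_iff, Set.mem_range]
  refine and_congr_right fun hw => ⟨fun ⟨m, hm⟩ => ⟨m + 1, hm⟩, fun ⟨m, hm⟩ => ?_⟩
  obtain ⟨n, hn, hper⟩ := hw
  refine ⟨n + m - 1, ?_⟩
  rw [← Function.iterate_succ_apply, Nat.succ_eq_add_one, Nat.sub_add_cancel (by omega),
    Function.iterate_add_apply, hm, hper.eq]

lemma Set.MapsTo.subset_periodicPts {α : Type*} {g : α → α} {s : Set α} (hs : s.Finite)
    (hmaps : Set.MapsTo g s s) (hsurj : Set.SurjOn g s s) : s ⊆ Function.periodicPts g := by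
  intro x hx
  have := hs.to_subtype
  have hinj : Function.Injective hmaps.restrict :=
    Finite.injective_iff_surjective.mpr (hmaps.restrict_surjective_iff.mpr hsurj)
  obtain ⟨n, hn, hper⟩ := hinj.mem_periodicPts ⟨x, hx⟩
  have hgx := congrArg Subtype.val hper.eq
  rw [hmaps.coe_iterate_restrict] at hgx
  exact ⟨n, hn, hgx⟩

namespace IsCoveringSelection

variable {W : Type*} {H : SimpleGraph W} {f : W → Sym2 W}

lemma partner_eq_or_partner_eq (hf : IsCoveringSelection H f) {x y : W} (hxy : H.Adj x y) :
    hf.1.partner x = y ∨ hf.1.partner y = x := by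
  obtain ⟨v, hv⟩ := hf.2 (H.mem_edgeSet.mpr hxy)
  rcases Sym2.mem_iff.mp (hv ▸ hf.1 v : v ∈ s(x, y)) with rfl | rfl
  · exact .inl (Sym2.congr_right.mp ((hf.1.mk_partner v).trans hv))
  · exact .inr (Sym2.congr_right.mp ((hf.1.mk_partner v).trans (hv.trans Sym2.eq_swap)))

lemma limitCycle_eq_of_reachable (hf : IsCoveringSelection H f) {x y : W} (h : H.Reachable x y) :
    limitCycle hf.1.partner x = limitCycle hf.1.partner y := by
  obtain ⟨p⟩ := h
  induction p with
  | nil => rfl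
  | cons hxy _ ih =>
    rw [← ih]
    rcases hf.partner_eq_or_partner_eq hxy with h | h
    · rw [← h, limitCycle_apply]
    · rw [← h, limitCycle_apply]

variable [DecidableEq W] {u : W} {p : H.Walk u u}

lemma image_support_eq_edges (hf : IsCoveringSelection H f) (hp : p.IsCycle) :
    p.support.toFinset.image f = p.edges.toFinset := by
  refine (Finset.eq_of_subset_of_card_le (fun e he => ?_) ?_).symm
  · rw [List.mem_toFinset] at he
    obtain ⟨v, rfl⟩ := hf.2 (p.edges_subset_edgeSet he)
    exact Finset.mem_image_of_mem f
      (List.mem_toFinset.mpr (p.mem_support_of_mem_edges he (hf.1 v)))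
  · rw [List.toFinset_card_of_nodup hp.edges_nodup, length_edges, ← hp.card_support_toFinset]
    exact Finset.card_image_le

lemma support_eq_limitCycle (hf : IsCoveringSelection H f) (hp : p.IsCycle) :
    {v | v ∈ p.support} = limitCycle hf.1.partner u := by
  have hmaps : Set.MapsTo hf.1.partner {v | v ∈ p.support} {v | v ∈ p.support} := by
    intro v hv
    have hfv : f v ∈ p.edges := by
      rw [← List.mem_toFinset, ← hf.image_support_eq_edges hp]
      exact Finset.mem_image_of_mem f (List.mem_toFinset.mpr hv)
    exact p.mem_support_of_mem_edges hfv (hf.1.mk_partner v ▸ Sym2.mem_mk_right _ _)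
  have hsurj : Set.SurjOn hf.1.partner {v | v ∈ p.support} {v | v ∈ p.support} := by
    intro x hx
    obtain ⟨y, z, hyz, hy, hz⟩ := hp.exists_ne_mk_mem_edges hx
    rcases hf.partner_eq_or_partner_eq (p.adj_of_mem_edges hy) with hxy | hyx
    · rcases hf.partner_eq_or_partner_eq (p.adj_of_mem_edges hz) with hxz | hzx
      · exact absurd (hxy.symm.trans hxz) hyz
      · exact ⟨z, p.snd_mem_support_of_mem_edges hz, hzx⟩
    · exact ⟨y, p.snd_mem_support_of_mem_edges hy, hyx⟩
  have hper := hmaps.subset_periodicPts (List.finite_toSet _) hsurj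
  refine Set.Subset.antisymm (fun v hv => ?_) ?_
  · rw [hf.limitCycle_eq_of_reachable ⟨p.takeUntil v hv⟩]
    exact ⟨hper hv, 0, rfl⟩
  · rintro _ ⟨-, m, rfl⟩
    exact hmaps.iterate m p.start_mem_support

theorem quasiUnicyclic (hf : IsCoveringSelection H f) : QuasiUnicyclic H := by
  intro u v p q hp hq huv
  have hS : p.support.toFinset = q.support.toFinset := by
    ext w
    simpa using Set.ext_iff.mp ((hf.support_eq_limitCycle hp).trans
      ((hf.limitCycle_eq_of_reachable huv).trans (hf.support_eq_limitCycle hq).symm)) w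
  rw [← hf.image_support_eq_edges hp, ← hf.image_support_eq_edges hq, hS]

end IsCoveringSelection

section Peeling

variable {W : Type*} {H : SimpleGraph W}

lemma exists_isCoveringSelection_of_deleteEdges {S : Set (Sym2 W)} {T : Set W}
    {φ f : W → Sym2 W} (hφ : ∀ v ∈ T, v ∈ φ v) (hS : H.edgeSet ∩ S ⊆ φ '' T)
    (hT : ∀ e ∈ H.edgeSet, ∀ v ∈ T, v ∈ e → e ∈ S)
    (hf : IsCoveringSelection (H.deleteEdges S) f) : ∃ g, IsCoveringSelection H g := by
  classical
  refine ⟨T.piecewise φ f, fun v => ?_, fun e he => ?_⟩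
  · by_cases hv : v ∈ T
    · rw [Set.piecewise_eq_of_mem _ _ _ hv]; exact hφ v hv
    · rw [Set.piecewise_eq_of_notMem _ _ _ hv]; exact hf.1 v
  · by_cases heS : e ∈ S
    · obtain ⟨t, ht, rfl⟩ := hS ⟨he, heS⟩
      exact ⟨t, Set.piecewise_eq_of_mem _ _ _ ht⟩
    · obtain ⟨w, rfl⟩ := hf.2 (by rw [edgeSet_deleteEdges]; exact ⟨he, heS⟩)
      have hw : w ∉ T := fun hw => heS (hT _ he w hw (hf.1 w))
      exact ⟨w, Set.piecewise_eq_of_notMem _ _ _ hw⟩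

lemma exists_isCoveringSelection_of_neighborSet_eq_singleton {v y : W} {f : W → Sym2 W}
    (hvy : H.neighborSet v = {y}) (hf : IsCoveringSelection (H.deleteEdges {s(v, y)}) f) :
    ∃ g, IsCoveringSelection H g := by
  refine exists_isCoveringSelection_of_deleteEdges (T := {v}) (φ := fun _ => s(v, y))
    (by simp) (by simp) ?_ hf
  rintro e he w rfl hwe
  have hother : Sym2.Mem.other hwe ∈ H.neighborSet w := by
    rw [mem_neighborSet, ← SimpleGraph.mem_edgeSet, Sym2.other_spec]; exact he
  rw [hvy] at hother
  rw [← Sym2.other_spec hwe, hother]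
  rfl

lemma exists_isCoveringSelection_of_isCycle {u : W} {c : H.Walk u u} {f : W → Sym2 W}
    (hc : c.IsCycle) (hclosed : ∀ v ∈ c.support, ∀ w, H.Adj v w → s(v, w) ∈ c.edges)
    (hf : IsCoveringSelection (H.deleteEdges {e | e ∈ c.edges}) f) :
    ∃ g, IsCoveringSelection H g := by
  obtain ⟨φ, hφ, hcov⟩ := hc.exists_isOneSelection
  refine exists_isCoveringSelection_of_deleteEdges (T := {v | v ∈ c.support})
    (fun v _ => hφ v) (fun e he => hcov e he.2) ?_ hf
  intro e he v hv hve
  rw [← Sym2.other_spec hve] at he ⊢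
  exact hclosed v hv _ he

theorem QuasiUnicyclic.exists_isCoveringSelection [Finite W] [DecidableEq W]
    (hH : QuasiUnicyclic H) : ∃ f, IsCoveringSelection H f := by
  induction H using WellFoundedLT.induction with
  | _ H ih =>
  by_cases hleaf : ∃ v y, H.neighborSet v = {y}
  · obtain ⟨v, y, hvy⟩ := hleaf
    have hadj : H.Adj v y := show y ∈ H.neighborSet v by rw [hvy]; rfl
    obtain ⟨f, hf⟩ := ih _ (deleteEdges_lt_of_mem (S := {s(v, y)}) (H.mem_edgeSet.mpr hadj) rfl)
      (hH.anti (H.deleteEdges_le _))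
    exact exists_isCoveringSelection_of_neighborSet_eq_singleton hvy hf
  push Not at hleaf
  have hdeg : ∀ v, (H.neighborSet v).ncard ≠ 1 := fun v h => by
    obtain ⟨y, hy⟩ := Set.ncard_eq_one.mp h
    exact hleaf v y hy
  by_cases hE : ∃ z y, H.Adj z y
  swap
  · push Not at hE
    refine ⟨_, isOneSelection_diag, fun e he => ?_⟩
    induction e using Sym2.ind with
    | _ a b => exact absurd he (hE a b)
  obtain ⟨z, y, hzy⟩ := hE
  -- without leaves, any cycle is a whole component and can be peeled off
  obtain ⟨u, c, hc, -⟩ := exists_isCycle_of_ncard_neighborSet_ne_one hzy fun v _ _ => hdeg v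
  obtain ⟨x, -, -, hx, -⟩ := hc.exists_ne_mk_mem_edges c.start_mem_support
  obtain ⟨f, hf⟩ := ih _
    (deleteEdges_lt_of_mem (S := {e | e ∈ c.edges}) (c.edges_subset_edgeSet hx) hx)
    (hH.anti (H.deleteEdges_le _))
  exact exists_isCoveringSelection_of_isCycle hc
    (fun v hv _ hvw => hH.mk_mem_edges_of_mem_support hdeg hc hv hvw) hf

end Peeling

section Partition

variable {V ι : Type*} {G : SimpleGraph V}

lemma quasiUnicyclic_induce_of_coloring [DecidableEq V] {f : V → Sym2 V}
    (hf : IsOneSelection G f) (C : (oneRemoved G f).Coloring ι) (i : ι) :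
    QuasiUnicyclic (G.induce (C ⁻¹' {i})) := by
  set K := G.deleteEdges (Set.range f)ᶜ
  have hK : IsCoveringSelection K f :=
    ⟨hf, fun e he => by rw [edgeSet_deleteEdges] at he; simpa using he.2⟩
  -- inside a colour class every edge of `G` was removed, i.e. selected
  have hGK : G.induce (C ⁻¹' {i}) = K.induce (C ⁻¹' {i}) := by
    ext ⟨a, ha⟩ ⟨b, hb⟩
    simp only [comap_adj, Function.Embedding.coe_subtype, K, deleteEdges_adj,
      Set.mem_compl_iff, not_not]
    refine ⟨fun h => ⟨h, ?_⟩, And.left⟩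
    by_contra hnot
    exact C.valid (by simp [oneRemoved, h, hnot] : (oneRemoved G f).Adj a b)
      ((show C a = i from ha).trans (show C b = i from hb).symm)
  rw [hGK]
  exact hK.quasiUnicyclic.induce _

lemma exists_coloring_of_quasiUnicyclic_induce [Finite V] [DecidableEq V] (c : V → ι)
    (hc : ∀ i, QuasiUnicyclic (G.induce (c ⁻¹' {i}))) :
    ∃ f, IsOneSelection G f ∧ Nonempty ((oneRemoved G f).Coloring ι) := by
  choose F hF using fun i => (hc i).exists_isCoveringSelection
  set f : V → Sym2 V := fun v => (F (c v) ⟨v, rfl⟩).map Subtype.val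
  have hfF : ∀ i (x : c ⁻¹' {i}), f x = (F i x).map Subtype.val := by
    rintro i ⟨x, hx⟩
    obtain rfl : c x = i := hx
    rfl
  refine ⟨f, fun v => Sym2.mem_map.mpr ⟨_, (hF _).1 _, rfl⟩,
    ⟨Coloring.mk c fun {a b} hab hcab => ?_⟩⟩
  rw [oneRemoved, deleteEdges_adj] at hab
  obtain ⟨x, hx⟩ := (hF (c a)).2
    (show s(⟨a, rfl⟩, ⟨b, hcab.symm⟩) ∈ (G.induce (c ⁻¹' {c a})).edgeSet from hab.1)
  exact hab.2 ⟨x, by rw [hfF, hx]; rfl⟩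

variable (G) in
lemma colorable_chromNum [Fintype V] : G.Colorable (chromNum G) :=
  Nat.sInf_mem (s := {n | G.Colorable n}) ⟨_, G.colorable_of_fintype⟩

lemma robustChromNum_eq_sInf_colorable [Fintype V] :
    robustChromNum G = sInf {k | ∃ f, IsOneSelection G f ∧ (oneRemoved G f).Colorable k} := by
  apply le_antisymm
  · obtain ⟨f, hf, hk⟩ : sInf {k | ∃ f, IsOneSelection G f ∧ (oneRemoved G f).Colorable k} ∈
        {k | ∃ f, IsOneSelection G f ∧ (oneRemoved G f).Colorable k} :=
      Nat.sInf_mem ⟨_, _, isOneSelection_diag, colorable_of_fintype _⟩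
    calc robustChromNum G ≤ chromNum (oneRemoved G f) := Nat.sInf_le ⟨f, hf, rfl⟩
      _ ≤ _ := Nat.sInf_le hk
  · obtain ⟨f, hf, hm⟩ : robustChromNum G ∈
        {m | ∃ f, IsOneSelection G f ∧ chromNum (oneRemoved G f) = m} :=
      Nat.sInf_mem ⟨_, _, isOneSelection_diag, rfl⟩
    exact Nat.sInf_le ⟨f, hf, hm ▸ colorable_chromNum _⟩

end Partition

/-- `χ₁(G)` equals the minimum number of classes in a partition of `V(G)`
into sets each inducing a quasi-unicyclic subgraph. -/
theorem robustChromNum_eq_min_quasiUnicyclic_partition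
    (V : Type) [Fintype V] [DecidableEq V] (G : SimpleGraph V) :
    robustChromNum G =
      sInf {k : ℕ | ∃ c : V → Fin k,
        ∀ i : Fin k, QuasiUnicyclic (G.induce (c ⁻¹' {i}))} := by
  rw [robustChromNum_eq_sInf_colorable]
  congr 1
  ext k
  exact ⟨fun ⟨f, hf, ⟨C⟩⟩ => ⟨C, quasiUnicyclic_induce_of_coloring hf C⟩,
    fun ⟨c, hc⟩ => exists_coloring_of_quasiUnicyclic_induce c hc⟩
end

section
/- For every integer k ≥ 2, the robust independence number of the Kneser graph KG(3k, k) satisfies α₁(KG(3k, k)) ≥ C(3k−1, k−1) + 2. -/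
open SimpleGraph

/-!
A 1-selection `v ↦ {v, g v}` deletes every edge `{v, g v}`, so a set `U` on which the edges
of `G` can be oriented with all out-degrees at most one is independent in `G_f`, and
`|U| ≤ α₁(G)`. In `KG(3k, k)` take `U` to be the star of a point `x` (the `C(3k-1, k-1)`
`k`-sets containing `x`, pairwise intersecting) together with two disjoint `k`-sets `A`, `B`
avoiding `x`. Orient `A → B → (A ∪ B)ᶜ`, and send each star vertex to `A` if it is disjoint
from `A` and to `B` otherwise: the only star vertex disjoint from both `A` and `B` is
`(A ∪ B)ᶜ`, and its edge to `B` is the one chosen by `B`.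
-/

section RobustIndependence

variable {V : Type*} [Fintype V] (G : SimpleGraph V)

theorem indepNum_le_card : _root_.indepNum G ≤ Fintype.card V :=
  csSup_le ⟨0, ∅, by simp [IsIndepVxSet]⟩ fun _ ⟨s, _, hs⟩ => hs ▸ s.card_le_univ

theorem card_le_indepNum {s : Finset V} (hs : IsIndepVxSet G s) : s.card ≤ _root_.indepNum G :=
  le_csSup ⟨Fintype.card V, fun _ ⟨t, _, ht⟩ => ht ▸ t.card_le_univ⟩ ⟨s, hs, rfl⟩

theorem indepNum_oneRemoved_le_robustIndepNum {f : V → Sym2 V} (hf : IsOneSelection G f) :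
    _root_.indepNum (oneRemoved G f) ≤ robustIndepNum G :=
  le_csSup ⟨Fintype.card V, fun _ ⟨_, _, hg⟩ => hg ▸ indepNum_le_card _⟩ ⟨f, hf, rfl⟩

theorem card_le_robustIndepNum_of_orientation {s : Finset V} (g : V → V)
    (hg : ∀ a ∈ s, ∀ b ∈ s, G.Adj a b → g a = b ∨ g b = a) :
    s.card ≤ robustIndepNum G := by
  have hsel : IsOneSelection G fun v => s(v, g v) := fun v => Sym2.mem_mk_left v (g v)
  refine (card_le_indepNum (oneRemoved G fun v => s(v, g v)) ?_).trans
    (indepNum_oneRemoved_le_robustIndepNum G hsel)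
  rintro a ha b hb - hab
  rw [oneRemoved, deleteEdges_adj] at hab
  refine hab.2 ?_
  rcases hg a ha b hb hab.1 with rfl | rfl
  · exact ⟨a, rfl⟩
  · exact ⟨b, Sym2.eq_swap⟩

end RobustIndependence

section Kneser

variable {n k : ℕ}

theorem ne_of_disjoint_of_pos (hk : 0 < k) {a b : {s : Finset (Fin n) // s.card = k}}
    (hab : Disjoint a.1 b.1) : a ≠ b := by
  rintro rfl
  have := a.2
  rw [disjoint_self.mp hab, Finset.bot_eq_empty, Finset.card_empty] at this
  omega

def kneserStar (k : ℕ) (x : Fin n) : Finset {s : Finset (Fin n) // s.card = k} :=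
  {v | x ∈ v.1}

@[simp]
theorem mem_kneserStar {x : Fin n} {v : {s : Finset (Fin n) // s.card = k}} :
    v ∈ kneserStar k x ↔ x ∈ v.1 := by
  simp [kneserStar]

theorem card_kneserStar (hk : 0 < k) (x : Fin n) :
    (kneserStar k x).card = (n - 1).choose (k - 1) := by
  have h := Finset.card_filter_powersetCard_subset {x} Finset.univ k (Finset.subset_univ _)
    (by rw [Finset.card_singleton]; exact hk)
  rw [Finset.card_singleton, Finset.card_univ, Fintype.card_fin] at h
  rw [← h, ← Finset.card_map (Function.Embedding.subtype _)]
  congr 1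
  ext s
  simp [kneserStar, and_comm]

theorem exists_disjoint_pair_notMem {α : Type*} [Fintype α] (x : α) {k : ℕ}
    (hk : 2 * k + 1 ≤ Fintype.card α) :
    ∃ A B : Finset α, A.card = k ∧ B.card = k ∧ Disjoint A B ∧ x ∉ A ∧ x ∉ B := by
  classical
  have hcard : (Finset.univ.erase x).card = Fintype.card α - 1 := by
    rw [Finset.card_erase_of_mem (Finset.mem_univ x), Finset.card_univ]
  obtain ⟨A, hA, hAk⟩ := Finset.exists_subset_card_eq (s := Finset.univ.erase x) (n := k)
    (by omega)
  obtain ⟨B, hB, hBk⟩ := Finset.exists_subset_card_eq (s := Finset.univ.erase x \ A) (n := k)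
    (by rw [Finset.card_sdiff_of_subset hA]; omega)
  refine ⟨A, B, hAk, hBk, Finset.disjoint_of_subset_right hB Finset.disjoint_sdiff,
    fun hx => ?_, fun hx => ?_⟩
  · simpa using hA hx
  · simpa using (Finset.mem_sdiff.mp (hB hx)).1

end Kneser

section KneserThreeK

variable {k : ℕ} {A B : {s : Finset (Fin (3 * k)) // s.card = k}}

def kneserCompl (hAB : Disjoint A.1 B.1) : {s : Finset (Fin (3 * k)) // s.card = k} :=
  ⟨(A.1 ∪ B.1)ᶜ, by
    rw [Finset.card_compl, Finset.card_union_of_disjoint hAB, A.2, B.2, Fintype.card_fin]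
    omega⟩

theorem eq_kneserCompl (hAB : Disjoint A.1 B.1) {v : {s : Finset (Fin (3 * k)) // s.card = k}}
    (hvA : Disjoint v.1 A.1) (hvB : Disjoint v.1 B.1) : v = kneserCompl hAB :=
  Subtype.ext <| Finset.eq_of_subset_of_card_le
    (Finset.subset_compl_iff_disjoint_right.mpr (Finset.disjoint_union_right.mpr ⟨hvA, hvB⟩))
    (by rw [v.2, (kneserCompl hAB).2])

open Classical in
noncomputable def kneserOrientation (hAB : Disjoint A.1 B.1)
    (v : {s : Finset (Fin (3 * k)) // s.card = k}) : {s : Finset (Fin (3 * k)) // s.card = k} :=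
  if v = A then B else if v = B then kneserCompl hAB else if Disjoint v.1 A.1 then A else B

theorem kneserOrientation_adj_of_mem_kneserStar (hAB : Disjoint A.1 B.1) {x : Fin (3 * k)}
    (hxA : x ∉ A.1) (hxB : x ∉ B.1)
    {a b : {s : Finset (Fin (3 * k)) // s.card = k}}
    (ha : a ∈ insert A (insert B (kneserStar k x))) (hb : b ∈ kneserStar k x)
    (hab : (kneserGraph (3 * k) k).Adj a b) :
    kneserOrientation hAB a = b ∨ kneserOrientation hAB b = a := by
  have hk : 0 < k := by have := x.pos; omega
  rw [mem_kneserStar] at hb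
  have hbA : b ≠ A := by rintro rfl; exact hxA hb
  have hbB : b ≠ B := by rintro rfl; exact hxB hb
  simp only [kneserOrientation, if_neg hbA, if_neg hbB]
  rcases Finset.mem_insert.mp ha with rfl | ha
  · exact .inr (if_pos hab.2.symm)
  rcases Finset.mem_insert.mp ha with ha | ha
  · rw [ha] at hab ⊢
    by_cases hb_disj : Disjoint b.1 A.1
    · left
      rw [eq_kneserCompl hAB hb_disj hab.2.symm, if_neg (ne_of_disjoint_of_pos hk hAB).symm,
        if_pos rfl]
    · exact .inr (if_neg hb_disj)
  · exact absurd hab.2 (Finset.not_disjoint_iff.mpr ⟨x, mem_kneserStar.mp ha, hb⟩)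

theorem kneserOrientation_adj (hAB : Disjoint A.1 B.1) {x : Fin (3 * k)}
    (hxA : x ∉ A.1) (hxB : x ∉ B.1) {a b : {s : Finset (Fin (3 * k)) // s.card = k}}
    (ha : a ∈ insert A (insert B (kneserStar k x)))
    (hb : b ∈ insert A (insert B (kneserStar k x))) (hab : (kneserGraph (3 * k) k).Adj a b) :
    kneserOrientation hAB a = b ∨ kneserOrientation hAB b = a := by
  wlog hb_star : b ∈ kneserStar k x generalizing a b
  · by_cases ha_star : a ∈ kneserStar k x
    · exact (this hb ha hab.symm ha_star).symm
    simp only [Finset.mem_insert, ha_star, hb_star, or_false] at ha hb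
    rcases ha with rfl | rfl <;> rcases hb with rfl | rfl
    all_goals first | exact absurd hab (SimpleGraph.irrefl _) | simp [kneserOrientation]
  exact kneserOrientation_adj_of_mem_kneserStar hAB hxA hxB ha hb_star hab

theorem card_insert_insert_kneserStar {x : Fin (3 * k)} (hxA : x ∉ A.1) (hxB : x ∉ B.1)
    (hAB : A ≠ B) : (insert A (insert B (kneserStar k x))).card = (kneserStar k x).card + 2 := by
  rw [Finset.card_insert_of_notMem (by simpa [hAB] using hxA),
    Finset.card_insert_of_notMem (by simpa using hxB)]

end KneserThreeK

/-- For every `k ≥ 2`, `α₁(KG(3k,k)) ≥ C(3k-1, k-1) + 2`. -/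
theorem robustIndepNum_kneserGraph_three_k (k : ℕ) (hk : 2 ≤ k) :
    (3 * k - 1).choose (k - 1) + 2 ≤ robustIndepNum (kneserGraph (3 * k) k) := by
  let x : Fin (3 * k) := ⟨0, by omega⟩
  obtain ⟨A, B, hA, hB, hAB, hxA, hxB⟩ :=
    exists_disjoint_pair_notMem x (k := k) (by rw [Fintype.card_fin]; omega)
  let a : {s : Finset (Fin (3 * k)) // s.card = k} := ⟨A, hA⟩
  let b : {s : Finset (Fin (3 * k)) // s.card = k} := ⟨B, hB⟩
  calc (3 * k - 1).choose (k - 1) + 2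
      = (insert a (insert b (kneserStar k x))).card := by
        rw [card_insert_insert_kneserStar hxA hxB (ne_of_disjoint_of_pos (by omega) hAB),
          card_kneserStar (by omega)]
    _ ≤ robustIndepNum (kneserGraph (3 * k) k) :=
        card_le_robustIndepNum_of_orientation _ (kneserOrientation (A := a) (B := b) hAB)
          fun _ hu _ hv huv => kneserOrientation_adj hAB hxA hxB hu hv huv
end
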